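/- arXiv:2511.06806 — 2 statements merged into one kernel-verified Lean document; each statement's English description precedes it below -/
import Mathlib

section
/- Under the bounded-gradient assumption and with F having L-Lipschitz gradient and global minimizer x*, the mini-batch gradient residual e at point x satisfies ‖e‖² ≤ 4((M_total - |B|)/M_total)²(β₁ + 2β₂L(F(x) - F(x*))). -/
/-!
Along the segment from `x` to `y`, `t ↦ F (x + t • (y - x)) - t ⟪∇F x, y - x⟫ - (L / 2) t² ‖y - x‖²`
is antitone, since `∇F` is `L`-Lipschitz; this is the descent lemma, and applied to the gradient
step `y = x - L⁻¹ ∇F x` against a lower bound of `F` it gives `‖∇F x‖² ≤ 2L (F x - F x*)`.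
Every sample gradient is then bounded by `G = √(β₁ + β₂ ‖∇F x‖²)`, and the triangle inequality
bounds each of the two sums making up the residual by `(M - |B|) / M · G`.
-/

open Finset

section Descent

variable {E : Type*} [NormedAddCommGroup E] [InnerProductSpace ℝ E] [CompleteSpace E]
  {F : E → ℝ} {gF : E → E} {L : ℝ}

theorem image_le_add_inner_add_sq_of_lipschitz_gradient (hgF : ∀ x, HasGradientAt F (gF x) x)
    (hlip : ∀ x y, ‖gF x - gF y‖ ≤ L * ‖x - y‖) (x y : E) :
    F y ≤ F x + inner ℝ (gF x) (y - x) + L / 2 * ‖y - x‖ ^ 2 := by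
  set v := y - x
  let φ : ℝ → ℝ := fun t ↦ F (x + t • v) - t * inner ℝ (gF x) v - L / 2 * t ^ 2 * ‖v‖ ^ 2
  have hφ : ∀ t, HasDerivAt φ
      (inner ℝ (gF (x + t • v)) v - inner ℝ (gF x) v - L * t * ‖v‖ ^ 2) t := by
    intro t
    have hline : HasDerivAt (fun t : ℝ ↦ x + t • v) v t := by
      simpa using ((hasDerivAt_id t).smul_const v).const_add x
    have hF_line : HasDerivAt (fun t : ℝ ↦ F (x + t • v)) (inner ℝ (gF (x + t • v)) v) t :=
      (hgF _).hasFDerivAt.comp_hasDerivAt t hline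
    have hquad := ((hasDerivAt_pow 2 t).const_mul (L / 2)).mul_const (‖v‖ ^ 2)
    exact ((hF_line.sub (hasDerivAt_mul_const _)).sub hquad).congr_deriv (by ring)
  have hslope : ∀ t, 0 < t →
      inner ℝ (gF (x + t • v)) v - inner ℝ (gF x) v - L * t * ‖v‖ ^ 2 ≤ 0 := by
    intro t ht
    calc inner ℝ (gF (x + t • v)) v - inner ℝ (gF x) v - L * t * ‖v‖ ^ 2
        = inner ℝ (gF (x + t • v) - gF x) v - L * t * ‖v‖ ^ 2 := by rw [inner_sub_left]
      _ ≤ ‖gF (x + t • v) - gF x‖ * ‖v‖ - L * t * ‖v‖ ^ 2 := by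
          gcongr; exact real_inner_le_norm _ _
      _ ≤ L * ‖x + t • v - x‖ * ‖v‖ - L * t * ‖v‖ ^ 2 := by gcongr; exact hlip _ _
      _ = 0 := by rw [add_sub_cancel_left, norm_smul, Real.norm_of_nonneg ht.le]; ring
  have hanti : AntitoneOn φ (Set.Ici 0) :=
    antitoneOn_of_hasDerivWithinAt_nonpos (convex_Ici 0)
      (fun t _ ↦ (hφ t).continuousAt.continuousWithinAt) (fun t _ ↦ (hφ t).hasDerivWithinAt)
      fun t ht ↦ hslope t (by rwa [interior_Ici] at ht)
  have h01 : φ 1 ≤ φ 0 := hanti (Set.mem_Ici.mpr le_rfl) (Set.mem_Ici.mpr zero_le_one) zero_le_one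
  have hxy : x + v = y := add_sub_cancel x y
  simp only [φ, one_smul, zero_smul, add_zero, hxy] at h01
  linarith

theorem norm_gradient_sq_le_of_lowerBound (hgF : ∀ x, HasGradientAt F (gF x) x)
    (hlip : ∀ x y, ‖gF x - gF y‖ ≤ L * ‖x - y‖) (hL : 0 < L) {m : ℝ} (hm : ∀ z, m ≤ F z)
    (x : E) : ‖gF x‖ ^ 2 ≤ 2 * L * (F x - m) := by
  have hstep := image_le_add_inner_add_sq_of_lipschitz_gradient hgF hlip x (x - L⁻¹ • gF x)
  rw [sub_sub_cancel_left, inner_neg_right, real_inner_smul_right, real_inner_self_eq_norm_sq,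
    norm_neg, norm_smul, Real.norm_of_nonneg (inv_nonneg.mpr hL.le)] at hstep
  have hdecrease : F (x - L⁻¹ • gF x) ≤ F x - ‖gF x‖ ^ 2 / (2 * L) := by
    convert hstep using 1
    field_simp
    ring
  have hgap : ‖gF x‖ ^ 2 / (2 * L) ≤ F x - m := by linarith [(hm _).trans hdecrease]
  rwa [div_le_iff₀ (by positivity), mul_comm] at hgap

end Descent

section Residual

variable {ι E : Type*} [SeminormedAddCommGroup E]

theorem norm_sum_le_card_mul (v : ι → E) (s : Finset ι) {G : ℝ} (hv : ∀ i, ‖v i‖ ≤ G) :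
    ‖∑ i ∈ s, v i‖ ≤ #s * G := by
  simpa [nsmul_eq_mul] using norm_sum_le_of_le s fun i _ ↦ hv i

variable [Fintype ι] [DecidableEq ι] [NormedSpace ℝ E]

theorem norm_batch_residual_le (v : ι → E) {B : Finset ι} (hB : B.Nonempty) {G : ℝ}
    (hv : ∀ i, ‖v i‖ ≤ G) :
    ‖((Fintype.card ι - #B : ℝ) / (Fintype.card ι * #B)) • ∑ i ∈ B, v i
        - (Fintype.card ι : ℝ)⁻¹ • ∑ i ∈ Bᶜ, v i‖ ≤
      2 * ((Fintype.card ι - #B : ℝ) / Fintype.card ι) * G := by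
  set N : ℝ := (Fintype.card ι : ℝ)
  set k : ℝ := (#B : ℝ)
  have hk : 0 < k := by simpa [k] using hB.card_pos
  have hkN : k ≤ N := by simpa [k, N] using card_le_univ B
  have hcompl : (#Bᶜ : ℝ) = N - k := by simp [card_compl, Nat.cast_sub (card_le_univ B), N, k]
  have hN : 0 < N := hk.trans_le hkN
  calc ‖((N - k) / (N * k)) • ∑ i ∈ B, v i - N⁻¹ • ∑ i ∈ Bᶜ, v i‖
      ≤ (N - k) / (N * k) * ‖∑ i ∈ B, v i‖ + N⁻¹ * ‖∑ i ∈ Bᶜ, v i‖ := by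
        refine (norm_sub_le _ _).trans_eq ?_
        rw [norm_smul, norm_smul, Real.norm_of_nonneg (by have := sub_nonneg.2 hkN; positivity),
          Real.norm_of_nonneg (by positivity)]
    _ ≤ (N - k) / (N * k) * (k * G) + N⁻¹ * ((N - k) * G) := by
        have := sub_nonneg.2 hkN
        gcongr
        · exact norm_sum_le_card_mul v B hv
        · exact hcompl ▸ norm_sum_le_card_mul v Bᶜ hv
    _ = 2 * ((N - k) / N) * G := by field_simp; ring

theorem norm_batch_residual_sq_le (v : ι → E) {B : Finset ι} (hB : B.Nonempty) {C : ℝ}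
    (hv : ∀ i, ‖v i‖ ^ 2 ≤ C) :
    ‖((Fintype.card ι - #B : ℝ) / (Fintype.card ι * #B)) • ∑ i ∈ B, v i
        - (Fintype.card ι : ℝ)⁻¹ • ∑ i ∈ Bᶜ, v i‖ ^ 2 ≤
      4 * ((Fintype.card ι - #B : ℝ) / Fintype.card ι) ^ 2 * C := by
  have hC : 0 ≤ C := (sq_nonneg _).trans (hv hB.choose)
  have hG : ∀ i, ‖v i‖ ≤ √C := fun i ↦ Real.le_sqrt_of_sq_le (hv i)
  calc _ ≤ (2 * ((Fintype.card ι - #B : ℝ) / Fintype.card ι) * √C) ^ 2 := by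
        gcongr; exact norm_batch_residual_le v hB hG
    _ = _ := by rw [mul_pow, mul_pow, Real.sq_sqrt hC]; ring

end Residual

theorem residual_bound_opt_gap_general {n M : ℕ}
    (F : EuclideanSpace ℝ (Fin n) → ℝ)
    (gf : Fin M → EuclideanSpace ℝ (Fin n) → EuclideanSpace ℝ (Fin n))
    (gF : EuclideanSpace ℝ (Fin n) → EuclideanSpace ℝ (Fin n))
    (hgF : ∀ x, HasGradientAt F (gF x) x)
    (β₁ β₂ : ℝ) (hβ₂ : 0 ≤ β₂)
    (hbound : ∀ m x, ‖gf m x‖ ^ 2 ≤ β₁ + β₂ * ‖gF x‖ ^ 2)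
    (L : ℝ) (hL : 0 < L)
    (hlip : ∀ x y, ‖gF x - gF y‖ ≤ L * ‖x - y‖)
    (xs : EuclideanSpace ℝ (Fin n)) (hmin : ∀ z, F xs ≤ F z)
    (B : Finset (Fin M)) (hB : B.Nonempty)
    (x : EuclideanSpace ℝ (Fin n)) :
    ‖(((M : ℝ) - B.card) / ((M : ℝ) * B.card)) • (∑ i ∈ B, gf i x)
        - ((M : ℝ))⁻¹ • (∑ i ∈ Bᶜ, gf i x)‖ ^ 2 ≤
      4 * (((M : ℝ) - B.card) / (M : ℝ)) ^ 2 *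
        (β₁ + 2 * β₂ * L * (F x - F xs)) := by
  have hsample : ∀ m, ‖gf m x‖ ^ 2 ≤ β₁ + 2 * β₂ * L * (F x - F xs) := by
    intro m
    have hgap := mul_le_mul_of_nonneg_left (norm_gradient_sq_le_of_lowerBound hgF hlip hL hmin x) hβ₂
    linarith [hbound m x]
  simpa using norm_batch_residual_sq_le (fun m ↦ gf m x) hB hsample

/-- Residual bound in terms of the optimality gap:
`‖e‖² ≤ 4((M - |B|)/M)² (β₁ + 2β₂ L (F x - F x*))`. -/
theorem residual_bound_opt_gap {n M : ℕ} (hM : 0 < M)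
    (f : Fin M → EuclideanSpace ℝ (Fin n) → ℝ)
    (F : EuclideanSpace ℝ (Fin n) → ℝ)
    (hF : ∀ x, F x = (1 / (M : ℝ)) * ∑ m, f m x)
    (gf : Fin M → EuclideanSpace ℝ (Fin n) → EuclideanSpace ℝ (Fin n))
    (gF : EuclideanSpace ℝ (Fin n) → EuclideanSpace ℝ (Fin n))
    (hgf : ∀ m x, HasGradientAt (f m) (gf m x) x)
    (hgF : ∀ x, HasGradientAt F (gF x) x)
    (β₁ β₂ : ℝ) (hβ₁ : 0 ≤ β₁) (hβ₂ : 0 ≤ β₂)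
    (hbound : ∀ m x, ‖gf m x‖ ^ 2 ≤ β₁ + β₂ * ‖gF x‖ ^ 2)
    (L : ℝ) (hL : 0 < L)
    (hlip : ∀ x y, ‖gF x - gF y‖ ≤ L * ‖x - y‖)
    (xs : EuclideanSpace ℝ (Fin n)) (hmin : ∀ z, F xs ≤ F z)
    (B : Finset (Fin M)) (hB : B.Nonempty)
    (x : EuclideanSpace ℝ (Fin n)) :
    ‖(((M : ℝ) - B.card) / ((M : ℝ) * B.card)) • (∑ i ∈ B, gf i x)
        - ((M : ℝ))⁻¹ • (∑ i ∈ Bᶜ, gf i x)‖ ^ 2 ≤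
      4 * (((M : ℝ) - B.card) / (M : ℝ)) ^ 2 *
        (β₁ + 2 * β₂ * L * (F x - F xs)) :=
  residual_bound_opt_gap_general F gf gF hgF β₁ β₂ hβ₂ hbound L hL hlip xs hmin B hB x
end

section
/- Let F be μ-strongly convex with L-Lipschitz gradient and minimizer x*. Consider iterates x_{i+1} = x_i - (1/L)(∇F(x_i) + e_i), where for each i the error satisfies ‖e_i‖² ≤ 4ρ²(β₁ + 2β₂L(F(x_i) - F(x*))) with ρ = (M_total - |B|)/M_total. Define Ψ = (1 - μ/L) + 4ρ²β₂ and assume Ψ ≠ 1. Then F(x_I) - F(x*) ≤ Ψ^I(F(x_0) - F(x*)) + 2ρ²(β₁/L)·(1 - Ψ^I)/(1 - Ψ). -/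
/-! The descent lemma for an `L`-smooth `F` turns the inexact step `x⁺ = x - (1/L)(∇F x + e)` into
`F x⁺ ≤ F x + (‖e‖² - ‖∇F x‖²)/(2L)`. Strong convexity gives the Polyak–Łojasiewicz inequality
`‖∇F x‖² ≥ 2μ(F x - F x*)`, so together with the error bound the gap `Δ = F x - F x*` contracts as
`Δ⁺ ≤ Ψ Δ + 2ρ²β₁/L`; unrolling this recursion sums a geometric series. -/

open RealInnerProductSpace

theorem le_add_deriv_add_of_deriv_le_add_mul {ψ ψ' : ℝ → ℝ} {K : ℝ}
    (hψ : ∀ t, HasDerivAt ψ (ψ' t) t) (hψ' : ∀ t ∈ Set.Icc (0 : ℝ) 1, ψ' t ≤ ψ' 0 + K * t) :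
    ψ 1 ≤ ψ 0 + ψ' 0 + K / 2 := by
  have hB : ∀ t, HasDerivAt (fun t => ψ 0 + ψ' 0 * t + K / 2 * t ^ 2) (ψ' 0 + K * t) t := by
    intro t
    have := (((hasDerivAt_id' t).const_mul (ψ' 0)).const_add (ψ 0)).add
      ((hasDerivAt_pow 2 t).const_mul (K / 2))
    exact this.congr_deriv (by norm_num; ring)
  have := image_le_of_deriv_right_le_deriv_boundary (a := 0) (b := 1)
    (fun t _ => (hψ t).continuousAt.continuousWithinAt) (fun t _ => (hψ t).hasDerivWithinAt)
    (by simp) (fun t _ => (hB t).continuousAt.continuousWithinAt)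
    (fun t _ => (hB t).hasDerivWithinAt) (fun t ht => hψ' t (Set.Ico_subset_Icc_self ht))
    (Set.right_mem_Icc.2 zero_le_one)
  simpa using this

theorem le_pow_mul_add_mul_geom_sum {d : ℕ → ℝ} {q c : ℝ} (hq : 0 ≤ q)
    (hd : ∀ i, d (i + 1) ≤ q * d i + c) : ∀ I, d I ≤ q ^ I * d 0 + c * ∑ k ∈ Finset.range I, q ^ k
  | 0 => by simp
  | I + 1 =>
    calc d (I + 1) ≤ q * d I + c := hd I
      _ ≤ q * (q ^ I * d 0 + c * ∑ k ∈ Finset.range I, q ^ k) + c := by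
        gcongr; exact le_pow_mul_add_mul_geom_sum hq hd I
      _ = q ^ (I + 1) * d 0 + c * ∑ k ∈ Finset.range (I + 1), q ^ k := by
        rw [geom_sum_succ]; ring

section InnerProductSpace

variable {E : Type*} [NormedAddCommGroup E] [InnerProductSpace ℝ E]

theorem HasGradientAt.hasDerivAt_comp_add_smul [CompleteSpace E] {F : E → ℝ} {g a v : E} {t : ℝ}
    (h : HasGradientAt F g (a + t • v)) :
    HasDerivAt (fun s : ℝ => F (a + s • v)) ⟪v, g⟫ t := by
  have hline : HasDerivAt (fun s : ℝ => a + s • v) v t := by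
    simpa using ((hasDerivAt_id t).smul_const v).const_add a
  have := h.hasFDerivAt.comp_hasDerivAt t hline
  rwa [InnerProductSpace.toDual_apply_apply, real_inner_comm] at this

theorem inner_sub_inner_le_of_lipschitz {g : E → E} {L : ℝ}
    (hlip : ∀ x y, ‖g x - g y‖ ≤ L * ‖x - y‖) (a v : E) {t : ℝ} (ht : 0 ≤ t) :
    ⟪v, g (a + t • v)⟫ - ⟪v, g a⟫ ≤ L * ‖v‖ ^ 2 * t :=
  calc ⟪v, g (a + t • v)⟫ - ⟪v, g a⟫ = ⟪v, g (a + t • v) - g a⟫ := (inner_sub_right _ _ _).symm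
    _ ≤ ‖v‖ * ‖g (a + t • v) - g a‖ := real_inner_le_norm _ _
    _ ≤ ‖v‖ * (L * ‖a + t • v - a‖) := by gcongr; exact hlip _ _
    _ = L * ‖v‖ ^ 2 * t := by
      rw [add_sub_cancel_left, norm_smul, Real.norm_of_nonneg ht]; ring

theorem le_add_inner_add_of_lipschitz_gradient [CompleteSpace E] {F : E → ℝ} {g : E → E} {L : ℝ}
    (hgrad : ∀ x, HasGradientAt F (g x) x) (hlip : ∀ x y, ‖g x - g y‖ ≤ L * ‖x - y‖) (a b : E) :
    F b ≤ F a + ⟪b - a, g a⟫ + L / 2 * ‖b - a‖ ^ 2 := by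
  have := le_add_deriv_add_of_deriv_le_add_mul (K := L * ‖b - a‖ ^ 2)
    (fun t => (hgrad (a + t • (b - a))).hasDerivAt_comp_add_smul) (fun t ht => by
      have := inner_sub_inner_le_of_lipschitz hlip a (b - a) ht.1
      simp only [zero_smul, add_zero]; linarith)
  simpa [mul_div_right_comm] using this

theorem two_mul_sub_le_norm_sq_of_strongly_convex {F : E → ℝ} {g : E → E} {μ : ℝ} (hμ : 0 < μ)
    (hsc : ∀ x y, F x ≥ F y + ⟪x - y, g y⟫ + (μ / 2) * ‖x - y‖ ^ 2) (z y : E) :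
    2 * μ * (F z - F y) ≤ ‖g z‖ ^ 2 := by
  have hzy := hsc y z
  have hinner : -(‖y - z‖ * ‖g z‖) ≤ ⟪y - z, g z⟫ := (abs_le.1 (abs_real_inner_le_norm _ _)).1
  nlinarith [sq_nonneg (‖g z‖ - μ * ‖y - z‖)]

theorem apply_inexact_gradient_step_le [CompleteSpace E] {F : E → ℝ} {g : E → E} {L : ℝ}
    (hL : 0 < L)
    (hgrad : ∀ x, HasGradientAt F (g x) x) (hlip : ∀ x y, ‖g x - g y‖ ≤ L * ‖x - y‖) (a e : E) :
    F (a - (1 / L) • (g a + e)) ≤ F a + (‖e‖ ^ 2 - ‖g a‖ ^ 2) / (2 * L) := by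
  have hdesc := le_add_inner_add_of_lipschitz_gradient hgrad hlip a (a - (1 / L) • (g a + e))
  have hquad : ⟪-((1 / L) • (g a + e)), g a⟫ + L / 2 * ‖-((1 / L) • (g a + e))‖ ^ 2
      = (‖e‖ ^ 2 - ‖g a‖ ^ 2) / (2 * L) := by
    rw [inner_neg_left, real_inner_smul_left, inner_add_left, real_inner_self_eq_norm_sq,
      norm_neg, norm_smul, mul_pow, norm_add_sq_real, real_inner_comm,
      Real.norm_of_nonneg (by positivity)]
    field_simp
    ring
  rw [sub_sub_cancel_left, add_assoc, hquad] at hdesc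
  exact hdesc

end InnerProductSpace

theorem ergodic_convergence_bound_general {n : ℕ} (F : EuclideanSpace ℝ (Fin n) → ℝ)
    (g : EuclideanSpace ℝ (Fin n) → EuclideanSpace ℝ (Fin n)) (μ L : ℝ)
    (hμ : 0 < μ) (hμL : μ ≤ L)
    (hgrad : ∀ x, HasGradientAt F (g x) x)
    (hsc : ∀ x y, F x ≥ F y + ⟪x - y, g y⟫ + (μ / 2) * ‖x - y‖ ^ 2)
    (hlip : ∀ x y, ‖g x - g y‖ ≤ L * ‖x - y‖)
    (xs : EuclideanSpace ℝ (Fin n))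
    (β₁ β₂ : ℝ) (hβ₂ : 0 ≤ β₂)
    (ρ : ℝ)
    (x : ℕ → EuclideanSpace ℝ (Fin n)) (e : ℕ → EuclideanSpace ℝ (Fin n))
    (hiter : ∀ i, x (i + 1) = x i - (1 / L) • (g (x i) + e i))
    (herr : ∀ i, ‖e i‖ ^ 2 ≤ 4 * ρ ^ 2 * (β₁ + 2 * β₂ * L * (F (x i) - F xs)))
    (Ψ : ℝ) (hΨ : Ψ = (1 - μ / L) + 4 * ρ ^ 2 * β₂) (hΨ1 : Ψ ≠ 1) :
    ∀ I : ℕ, F (x I) - F xs ≤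
      Ψ ^ I * (F (x 0) - F xs) + 2 * ρ ^ 2 * (β₁ / L) * (1 - Ψ ^ I) / (1 - Ψ) := by
  intro I
  have hL : 0 < L := hμ.trans_le hμL
  have hΨ0 : 0 ≤ Ψ := hΨ ▸ add_nonneg (sub_nonneg.2 ((div_le_one hL).2 hμL)) (by positivity)
  have hstep : ∀ i, F (x (i + 1)) - F xs ≤ Ψ * (F (x i) - F xs) + 2 * ρ ^ 2 * (β₁ / L) := by
    intro i
    have hdesc := hiter i ▸ apply_inexact_gradient_step_le hL hgrad hlip (x i) (e i)
    have hpl := two_mul_sub_le_norm_sq_of_strongly_convex hμ hsc (x i) xs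
    have hgain : (‖e i‖ ^ 2 - ‖g (x i)‖ ^ 2) / (2 * L)
        ≤ (4 * ρ ^ 2 * β₂ - μ / L) * (F (x i) - F xs) + 2 * ρ ^ 2 * (β₁ / L) := by
      have hscaled : ((4 * ρ ^ 2 * β₂ - μ / L) * (F (x i) - F xs) + 2 * ρ ^ 2 * (β₁ / L)) * (2 * L)
          = 4 * ρ ^ 2 * (β₁ + 2 * β₂ * L * (F (x i) - F xs)) - 2 * μ * (F (x i) - F xs) := by
        field_simp
        ring
      rw [div_le_iff₀ (by positivity), hscaled]
      linarith [herr i]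
    rw [hΨ]
    linarith
  calc F (x I) - F xs
      ≤ Ψ ^ I * (F (x 0) - F xs) + 2 * ρ ^ 2 * (β₁ / L) * ∑ k ∈ Finset.range I, Ψ ^ k :=
        le_pow_mul_add_mul_geom_sum (d := fun i => F (x i) - F xs) hΨ0 hstep I
    _ = Ψ ^ I * (F (x 0) - F xs) + 2 * ρ ^ 2 * (β₁ / L) * (1 - Ψ ^ I) / (1 - Ψ) := by
      rw [geom_sum_eq hΨ1, ← neg_sub 1 Ψ, ← neg_sub 1 (Ψ ^ I), neg_div_neg_eq, mul_div_assoc]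

/-- Ergodic convergence bound of Theorem 1: with perturbed gradient iterates and
error bound `‖e_i‖² ≤ 4ρ²(β₁ + 2β₂L(F x_i - F x*))`, one has
`F x_I - F x* ≤ Ψ^I (F x_0 - F x*) + 2ρ²(β₁/L)(1 - Ψ^I)/(1 - Ψ)`. -/
theorem ergodic_convergence_bound {n : ℕ} (F : EuclideanSpace ℝ (Fin n) → ℝ)
    (g : EuclideanSpace ℝ (Fin n) → EuclideanSpace ℝ (Fin n)) (μ L : ℝ)
    (hμ : 0 < μ) (hμL : μ ≤ L)
    (hgrad : ∀ x, HasGradientAt F (g x) x)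
    (hsc : ∀ x y, F x ≥ F y + ⟪x - y, g y⟫ + (μ / 2) * ‖x - y‖ ^ 2)
    (hlip : ∀ x y, ‖g x - g y‖ ≤ L * ‖x - y‖)
    (xs : EuclideanSpace ℝ (Fin n)) (hmin : ∀ z, F xs ≤ F z)
    (Mtot Bcard : ℕ) (hMtot : 0 < Mtot) (hBle : Bcard ≤ Mtot)
    (β₁ β₂ : ℝ) (hβ₁ : 0 ≤ β₁) (hβ₂ : 0 ≤ β₂)
    (ρ : ℝ) (hρ : ρ = ((Mtot : ℝ) - Bcard) / Mtot)
    (x : ℕ → EuclideanSpace ℝ (Fin n)) (e : ℕ → EuclideanSpace ℝ (Fin n))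
    (hiter : ∀ i, x (i + 1) = x i - (1 / L) • (g (x i) + e i))
    (herr : ∀ i, ‖e i‖ ^ 2 ≤ 4 * ρ ^ 2 * (β₁ + 2 * β₂ * L * (F (x i) - F xs)))
    (Ψ : ℝ) (hΨ : Ψ = (1 - μ / L) + 4 * ρ ^ 2 * β₂) (hΨ1 : Ψ ≠ 1) :
    ∀ I : ℕ, F (x I) - F xs ≤
      Ψ ^ I * (F (x 0) - F xs) + 2 * ρ ^ 2 * (β₁ / L) * (1 - Ψ ^ I) / (1 - Ψ) :=
  ergodic_convergence_bound_general F g μ L hμ hμL hgrad hsc hlip xs β₁ β₂ hβ₂ ρ x e hiter herr Ψ hΨ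
    hΨ1
end
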